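/- arXiv:1108.4028 — 2 statements merged into one kernel-verified Lean document; each statement's English description precedes it below -/
import Mathlib

section
/- Let M be a bounded complex of graded k[h]-modules (deg h > 0) whose cohomology modules all have grading bounded below. If M ⊗^L_{k[h]} k₀ has cohomology concentrated in a single degree, then M has cohomology concentrated in that same degree. -/
/-!
Graded Nakayama: if `a` raises degrees by `d > 0` and `M = a • M` for a `ℤ`-graded module `M`
whose grading is bounded below, then comparing homogeneous components shows that every
homogeneous element of degree `j` is `a` times one of degree `j - d`. Descending in degree
until the grading runs out, every homogeneous component, hence `M`, vanishes. The theorem is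
this for `a = h` acting on each cohomology module `H i` with `i ≠ n`.
-/

namespace GradedNakayama

variable {R A M : Type*} [Ring R] [AddCommGroup M] [Module R M] [DistribSMul A M]
  {ℳ : ℤ → Submodule R M} {a : A} {d : ℤ}

lemma exists_mem_smul_sub_mem_iSup_ne (hdeg : ∀ j, ∀ m ∈ ℳ j, a • m ∈ ℳ (j + d))
    (j : ℤ) {y : M} (hy : y ∈ ⨆ l, ℳ l) :
    ∃ z ∈ ℳ (j - d), a • y - a • z ∈ ⨆ (l) (_ : l ≠ j), ℳ l := by
  induction hy using Submodule.iSup_induction' with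
  | mem l y hy =>
    by_cases hl : l = j - d
    · exact ⟨y, hl ▸ hy, by simp⟩
    · refine ⟨0, zero_mem _, ?_⟩
      rw [smul_zero, sub_zero]
      exact Submodule.mem_iSup_of_mem (l + d) <|
        Submodule.mem_iSup_of_mem (by omega) (hdeg l y hy)
  | zero => exact ⟨0, zero_mem _, by simp⟩
  | add y₁ y₂ _ _ h₁ h₂ =>
    obtain ⟨z₁, hz₁, h₁⟩ := h₁
    obtain ⟨z₂, hz₂, h₂⟩ := h₂
    refine ⟨z₁ + z₂, add_mem hz₁ hz₂, ?_⟩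
    convert add_mem h₁ h₂ using 1
    simp only [smul_add]
    abel

lemma exists_mem_eq_smul_of_mem_eq_smul (hind : iSupIndep ℳ) (hsup : ⨆ l, ℳ l = ⊤)
    (hdeg : ∀ j, ∀ m ∈ ℳ j, a • m ∈ ℳ (j + d)) {j : ℤ} {x y : M} (hx : x ∈ ℳ j)
    (hxy : x = a • y) : ∃ z ∈ ℳ (j - d), x = a • z := by
  obtain ⟨z, hz, hrest⟩ := exists_mem_smul_sub_mem_iSup_ne hdeg j (hsup ▸ Submodule.mem_top (x := y))
  have haz : a • z ∈ ℳ j := by simpa using hdeg _ z hz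
  have hdiff : x - a • z = 0 :=
    Submodule.disjoint_def.mp (hind j) _ (sub_mem hx haz) (hxy ▸ hrest)
  exact ⟨z, hz, sub_eq_zero.mp hdiff⟩

theorem eq_bot_of_forall_eq_smul (hind : iSupIndep ℳ) (hsup : ⨆ l, ℳ l = ⊤)
    (hd : 0 < d) (hdeg : ∀ j, ∀ m ∈ ℳ j, a • m ∈ ℳ (j + d)) (hbdd : ∃ m, ∀ j < m, ℳ j = ⊥)
    (hdiv : ∀ x : M, ∃ y, x = a • y) (j : ℤ) : ℳ j = ⊥ := by
  obtain ⟨m, hm⟩ := hbdd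
  suffices ∀ N : ℕ, ∀ j < m + N, ℳ j = ⊥ from this (j - m + 1).toNat j (by omega)
  intro N
  induction N with
  | zero => simpa using hm
  | succ N ih =>
    intro j hj
    refine (Submodule.eq_bot_iff _).mpr fun x hx => ?_
    obtain ⟨y, hxy⟩ := hdiv x
    obtain ⟨z, hz, rfl⟩ := exists_mem_eq_smul_of_mem_eq_smul hind hsup hdeg hx hxy
    rw [(Submodule.eq_bot_iff _).mp (ih (j - d) (by omega)) z hz, smul_zero]

theorem eq_zero_of_forall_eq_smul (hind : iSupIndep ℳ) (hsup : ⨆ l, ℳ l = ⊤)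
    (hd : 0 < d) (hdeg : ∀ j, ∀ m ∈ ℳ j, a • m ∈ ℳ (j + d)) (hbdd : ∃ m, ∀ j < m, ℳ j = ⊥)
    (hdiv : ∀ x : M, ∃ y, x = a • y) (x : M) : x = 0 := by
  have htop : (⊤ : Submodule R M) = ⊥ := by
    rw [← hsup, iSup_eq_bot]
    exact eq_bot_of_forall_eq_smul hind hsup hd hdeg hbdd hdiv
  exact (Submodule.eq_bot_iff _).mp htop x Submodule.mem_top

end GradedNakayama

/-- Since `k[h]` is a PID, `M` splits as the sum of its shifted cohomologies `H i`, and
`H^i(M ⊗^L k₀) ≅ H i / h H i ⊕ Tor₁(k₀, H (i + 1))`; `hquot` is the vanishing of the first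
summand for `i ≠ n`. -/
theorem graded_nakayama_complexes_concentrated_general
    {k : Type*} [Field k] (n : ℤ)
    (H : ℤ → Type*) [∀ i, AddCommGroup (H i)] [∀ i, Module (Polynomial k) (H i)]
    [∀ i, Module k (H i)]
    (ℳ : ∀ i : ℤ, ℤ → Submodule k (H i))
    (hind : ∀ i, iSupIndep (ℳ i))
    (hsup : ∀ i, (⨆ j, ℳ i j) = ⊤)
    (hdeg : ∀ i, ∀ j : ℤ, ∀ m ∈ ℳ i j, (Polynomial.X : Polynomial k) • m ∈ ℳ i (j + 2))
    (hbdd : ∀ i, ∃ m : ℤ, ∀ j < m, ℳ i j = ⊥)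
    -- `M ⊗^L k₀` is concentrated in degree `n`:
    (hquot : ∀ i, i ≠ n → ∀ x : H i, ∃ y : H i, x = (Polynomial.X : Polynomial k) • y) :
    ∀ i, i ≠ n → ∀ x : H i, x = 0 := fun i hi =>
  GradedNakayama.eq_zero_of_forall_eq_smul (hind i) (hsup i) two_pos (hdeg i) (hbdd i)
    (hquot i hi)

/-- **Graded Nakayama for complexes, part 2.** Let `M` be a bounded complex of graded
`k[h]`-modules (`deg h = 2 > 0`) whose cohomology modules `H i` are graded with grading
bounded below.  Over the PID `k[h]` the complex splits as the sum of its shifted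
cohomologies, and `H^i(M ⊗^L_{k[h]} k₀) ≅ (H i)/h(H i) ⊕ Tor₁^{k[h]}(k₀, H (i+1))`.
If `M ⊗^L_{k[h]} k₀` has cohomology concentrated in the single degree `n` — i.e.
`(H i)/h(H i) = 0` for `i ≠ n` and the `h`-torsion `Tor₁(k₀, H i)` vanishes for
`i ≠ n + 1` — then the cohomology of `M` is concentrated in degree `n`. -/
theorem graded_nakayama_complexes_concentrated
    {k : Type*} [Field k] (n : ℤ)
    (H : ℤ → Type*) [∀ i, AddCommGroup (H i)] [∀ i, Module (Polynomial k) (H i)]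
    [∀ i, Module k (H i)] [∀ i, IsScalarTower k (Polynomial k) (H i)]
    (ℳ : ∀ i : ℤ, ℤ → Submodule k (H i))
    (hind : ∀ i, iSupIndep (ℳ i))
    (hsup : ∀ i, (⨆ j, ℳ i j) = ⊤)
    (hdeg : ∀ i, ∀ j : ℤ, ∀ m ∈ ℳ i j, (Polynomial.X : Polynomial k) • m ∈ ℳ i (j + 2))
    (hbdd : ∀ i, ∃ m : ℤ, ∀ j < m, ℳ i j = ⊥)
    (hbounded : ∃ a b : ℤ, ∀ i : ℤ, (i < a ∨ b < i) → ∀ x : H i, x = 0)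
    -- `M ⊗^L k₀` is concentrated in degree `n`:
    (hquot : ∀ i, i ≠ n → ∀ x : H i, ∃ y : H i, x = (Polynomial.X : Polynomial k) • y)
    (htor : ∀ i, i ≠ n + 1 → ∀ x : H i, (Polynomial.X : Polynomial k) • x = 0 → x = 0) :
    ∀ i, i ≠ n → ∀ x : H i, x = 0 :=
  graded_nakayama_complexes_concentrated_general n H ℳ hind hsup hdeg hbdd hquot
end

section
/- Let A be a commutative ring with an action of a group W, let s, s₀ ∈ W be conjugate elements, say s₀ = b^{-1} s b, and for w ∈ W let I_w ⊂ A ⊗ A be the kernel of the multiplication-twisted map A ⊗ A → A, x ⊗ y ↦ x·w(y). Define R_s = (A ⊗ A)/(I_e ∩ I_s). Then conjugation by the invertible bimodules A_b induces an isomorphism of (A,A)-bimodules A_{b^{-1}} ⊗_A R_s ⊗_A A_b ≅ R_{s₀}. -/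
open TensorProduct

/-!
Write `μ_τ : A ⊗ A → A`, `x ⊗ y ↦ x · τ y`, so that `I_w = ker μ_{ρ w}`. For an automorphism `σ`
of `A` with `τ ∘ σ = σ ∘ τ'` one has `μ_τ ∘ (σ ⊗ σ) = σ ∘ μ_{τ'}`, so `σ ⊗ σ` pulls `ker μ_τ` back
to `ker μ_{τ'}`. With `σ = ρ b` this sends `I_w` to `I_{b⁻¹ w b}`, hence `I_e ∩ I_s` to
`I_e ∩ I_{s₀}`, and the ring automorphism `ρ b ⊗ ρ b` descends to the quotients.
-/

namespace Algebra.TensorProduct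

variable {R A : Type*} [CommSemiring R] [CommSemiring A] [Algebra R A]

def twistedMul (τ : A →ₐ[R] A) : A ⊗[R] A →ₐ[R] A :=
  (lmul' R).comp (map (AlgHom.id R A) τ)

@[simp]
theorem twistedMul_tmul (τ : A →ₐ[R] A) (x y : A) : twistedMul τ (x ⊗ₜ y) = x * τ y := rfl

theorem twistedMul_comp_map_self {σ τ τ' : A →ₐ[R] A} (h : τ.comp σ = σ.comp τ') :
    (twistedMul τ).comp (map σ σ) = σ.comp (twistedMul τ') :=
  ext' fun x y => by simpa using congrArg (σ x * · y) h

end Algebra.TensorProduct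

open Algebra.TensorProduct

theorem Ideal.comap_congr_ker_twistedMul {R A : Type*} [CommSemiring R] [CommSemiring A]
    [Algebra R A] {σ : A ≃ₐ[R] A} {τ τ' : A →ₐ[R] A}
    (h : τ.comp σ.toAlgHom = σ.toAlgHom.comp τ') :
    Ideal.comap (congr σ σ) (RingHom.ker (twistedMul τ)) = RingHom.ker (twistedMul τ') := by
  ext z
  have hz := congrArg (· z) (twistedMul_comp_map_self h)
  simp only [AlgHom.comp_apply] at hz
  simp only [Ideal.mem_comap, RingHom.mem_ker, congr_apply, hz, AlgEquiv.coe_toAlgHom,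
    EmbeddingLike.map_eq_zero_iff]

/-- **Conjugating the Soergel bimodule `R_s` by the twisted bimodule `A_b`.**  Let a group
`W` act on a commutative `R`-algebra `A` by algebra automorphisms `ρ`.  For `w ∈ W` let
`I_w ⊆ A ⊗ A` be the kernel of the multiplication-twisted map `A ⊗ A → A`,
`x ⊗ y ↦ x · ρ w y` (so `A_w = (A ⊗ A)/I_w` is the twisted diagonal bimodule), and let
`R_s = (A ⊗ A)/(I_e ∩ I_s)`.  Conjugation by the invertible bimodule `A_b` acts on
`(A ⊗ A)`-modules through the automorphism `Θ = ρ b ⊗ ρ b` of `A ⊗ A`; for conjugate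
elements `s₀ = b⁻¹ s b` one has `Θ⁻¹(I_e ∩ I_s) = I_e ∩ I_{s₀}`, whence an isomorphism of
`(A,A)`-bimodules `A_{b⁻¹} ⊗_A R_s ⊗_A A_b ≅ R_{s₀}`: a ring isomorphism
`R_{s₀} ≅ R_s` intertwining the `(A ⊗ A)`-module structures through `Θ`. -/
theorem conjugation_of_Rs
    {R A W : Type*} [CommRing R] [CommRing A] [Algebra R A] [Group W]
    (ρ : W →* (A ≃ₐ[R] A)) (s b : W) :
    let f : W → (TensorProduct R A A →ₐ[R] A) := fun w =>
      (Algebra.TensorProduct.lmul' R).comp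
        (Algebra.TensorProduct.map (AlgHom.id R A) (ρ w).toAlgHom)
    let I : W → Ideal (TensorProduct R A A) := fun w => RingHom.ker (f w)
    let Θ : TensorProduct R A A ≃ₐ[R] TensorProduct R A A :=
      Algebra.TensorProduct.congr (ρ b) (ρ b)
    Ideal.comap Θ (I 1 ⊓ I s) = I 1 ⊓ I (b⁻¹ * s * b) ∧
    ∃ e : (TensorProduct R A A ⧸ (I 1 ⊓ I (b⁻¹ * s * b))) ≃+*
          (TensorProduct R A A ⧸ (I 1 ⊓ I s)),
      ∀ z : TensorProduct R A A,
        e (Ideal.Quotient.mk (I 1 ⊓ I (b⁻¹ * s * b)) z) =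
          Ideal.Quotient.mk (I 1 ⊓ I s) (Θ z) := by
  intro f I Θ
  have hI : ∀ w, Ideal.comap Θ (I w) = I (b⁻¹ * w * b) := fun w =>
    Ideal.comap_congr_ker_twistedMul (τ := (ρ w).toAlgHom) <| by
      ext x
      simp [← AlgEquiv.mul_apply, ← map_mul, mul_assoc]
  have hcomap : Ideal.comap Θ (I 1 ⊓ I s) = I 1 ⊓ I (b⁻¹ * s * b) := by
    rw [Ideal.comap_inf, hI, hI, mul_one, inv_mul_cancel]
  have hmap : I 1 ⊓ I s = Ideal.map Θ.toRingEquiv (I 1 ⊓ I (b⁻¹ * s * b)) := by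
    rw [← hcomap]
    exact (Ideal.map_comap_of_surjective _ Θ.surjective _).symm
  exact ⟨hcomap, Ideal.quotientEquiv _ _ Θ.toRingEquiv hmap,
    Ideal.quotientEquiv_mk _ _ _ hmap⟩
end
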